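/- For the noncommutative 2-torus as a cleft extension with B = span{(uv)^k}, any FODC (Ω¹(B), d_B) on B satisfying d_B∘σ = 0 (with the 2-cocycle σ of the cleft structure, in particular σ(t⊗t⁻¹) = uv) must be the zero calculus: d_B((uv)^l) = 0 for all l ∈ ℤ and hence Ω¹(B) = 0. -/

import Mathlib

/-!
The kernel of the differential of any first order calculus is a subalgebra (Leibniz rule), and it
contains the inverse of every invertible element it contains. Since `z = uv` is invertible in
`ℂ[z, z⁻¹]` and `z, z⁻¹` generate it as an algebra, `d_B z = 0` forces `d_B = 0`; the 1-forms,
being spanned by `a d_B b`, then vanish as well.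
-/

noncomputable section

/-- A bimodule over a `k`-algebra `A`, given by a pair of commuting bilinear actions. -/
structure BimodData (k : Type) [Field k] (A M : Type) [Ring A] [Algebra k A]
    [AddCommGroup M] [Module k M] where
  l : A →ₗ[k] M →ₗ[k] M
  r : M →ₗ[k] A →ₗ[k] M
  one_l : ∀ m : M, l 1 m = m
  r_one : ∀ m : M, r m 1 = m
  mul_l : ∀ (a b : A) (m : M), l (a * b) m = l a (l b m)
  r_mul : ∀ (m : M) (a b : A), r (r m a) b = r m (a * b)
  l_r : ∀ (a : A) (m : M) (b : A), r (l a m) b = l a (r m b)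

/-- A first order differential calculus on `A` with bimodule of 1-forms `M`. -/
structure FODCData (k : Type) [Field k] (A M : Type) [Ring A] [Algebra k A]
    [AddCommGroup M] [Module k M] extends BimodData k A M where
  d : A →ₗ[k] M
  leibniz : ∀ a b : A, d (a * b) = r (d a) b + l a (d b)
  spanning : ∀ m : M, m ∈ Submodule.span k {z : M | ∃ a b : A, z = l a (d b)}

namespace FODCData

variable {k A M : Type} [Field k] [Ring A] [Algebra k A] [AddCommGroup M] [Module k M]
  (F : FODCData k A M)

theorem d_one : F.d 1 = 0 := by
  have h := F.leibniz 1 1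
  rw [one_mul, F.one_l, F.r_one] at h
  exact add_eq_right.mp h.symm

theorem d_mul_eq_zero {a b : A} (ha : F.d a = 0) (hb : F.d b = 0) : F.d (a * b) = 0 := by
  rw [F.leibniz, ha, hb, map_zero, map_zero, LinearMap.zero_apply, zero_add]

theorem d_algebraMap (c : k) : F.d (algebraMap k A c) = 0 := by
  rw [Algebra.algebraMap_eq_smul_one, map_smul, F.d_one, smul_zero]

def constants : Subalgebra k A where
  carrier := {a | F.d a = 0}
  mul_mem' := F.d_mul_eq_zero
  add_mem' {a b} (ha : F.d a = 0) (hb : F.d b = 0) := by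
    rw [Set.mem_ofPred_eq, map_add, ha, hb, add_zero]
  algebraMap_mem' := F.d_algebraMap

theorem mem_constants {a : A} : a ∈ F.constants ↔ F.d a = 0 := Iff.rfl

theorem d_eq_zero_of_mul_eq_one {a b : A} (hab : a * b = 1) (hba : b * a = 1)
    (ha : F.d a = 0) : F.d b = 0 := by
  have h : F.l a (F.d b) = 0 := by
    simpa [ha, hab, F.d_one] using (F.leibniz a b).symm
  calc F.d b = F.l (b * a) (F.d b) := by rw [hba, F.one_l]
    _ = 0 := by rw [F.mul_l, h, map_zero]

theorem eq_zero_of_d_eq_zero (hd : ∀ a, F.d a = 0) (m : M) : m = 0 := by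
  have hgen : {z : M | ∃ a b : A, z = F.l a (F.d b)} ⊆ {0} := by
    rintro z ⟨a, b, rfl⟩
    rw [hd b, map_zero, Set.mem_singleton_iff]
  simpa using Submodule.span_mono hgen (F.spanning m)

end FODCData

namespace LaurentPolynomial

theorem subalgebra_eq_top_of_T_mem {R : Type*} [CommSemiring R] (S : Subalgebra R R[T;T⁻¹])
    (h_one : T 1 ∈ S) (h_neg_one : T (-1) ∈ S) : S = ⊤ := by
  have hT : ∀ n : ℤ, (T n : R[T;T⁻¹]) ∈ S := by
    intro n
    induction n using Int.induction_on with
    | zero => simpa only [T_zero] using S.one_mem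
    | succ n ih => simpa only [T_add] using S.mul_mem ih h_one
    | pred n ih => simpa only [sub_eq_add_neg, T_add] using S.mul_mem ih h_neg_one
  refine Algebra.eq_top_iff.mpr fun p => ?_
  induction p using LaurentPolynomial.induction_on' with
  | add p q hp hq => exact S.add_mem hp hq
  | C_mul_T n c => exact S.mul_mem (C_eq_algebraMap c ▸ S.algebraMap_mem c) (hT n)

end LaurentPolynomial

/-- For the noncommutative 2-torus as a cleft extension, the base
algebra is `B = span_ℂ{(uv)^k : k ∈ ℤ} ≅ ℂ[z, z⁻¹]` (Laurent polynomials, with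
`z = uv = LaurentPolynomial.T 1`).  Any FODC `(Ω¹(B), d_B)` on `B` satisfying
`d_B ∘ σ = 0` — in particular `d_B(z) = d_B(σ(t ⊗ t⁻¹)) = 0` — must be the zero calculus:
`d_B((uv)^l) = 0` for all `l ∈ ℤ` and hence `Ω¹(B) = 0`. -/
theorem torus_base_calculus_is_zero
    (M : Type) [AddCommGroup M] [Module ℂ M]
    (F : FODCData ℂ (LaurentPolynomial ℂ) M)
    (h_dσ : F.d (LaurentPolynomial.T 1) = 0) :
    (∀ l : ℤ, F.d (LaurentPolynomial.T l) = 0) ∧ (∀ m : M, m = 0) := by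
  open LaurentPolynomial in
  have h_dz_inv : F.d (T (-1)) = 0 :=
    F.d_eq_zero_of_mul_eq_one (by rw [← T_add, add_neg_cancel, T_zero])
      (by rw [← T_add, neg_add_cancel, T_zero]) h_dσ
  have h_top : F.constants = ⊤ := LaurentPolynomial.subalgebra_eq_top_of_T_mem _ h_dσ h_dz_inv
  have hd : ∀ a, F.d a = 0 := fun a => F.mem_constants.mp (h_top ▸ Algebra.mem_top)
  exact ⟨fun l => hd _, F.eq_zero_of_d_eq_zero hd⟩

end
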